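/- arXiv:1606.06940 — 3 statements merged into one kernel-verified Lean document; each statement's English description precedes it below -/
import Mathlib

section
/- Suppose 3m rectangles, where rectangle i has width w and height h_i with h' < h_i < h'' for all i, are packed without overlap into a W × H rectangle, where H < 4h' (so no four rectangles can share an x-coordinate) and W < (m+1)w (so no m+1 rectangles can share a y-coordinate). If additionally H − 3h' < h' and W − mw < w, then the rectangles can be partitioned into m groups of exactly 3 rectangles each, such that the rectangles in each group pairwise share an x-coordinate (they are stabbed by a common vertical line). -/
/-!
Draw the `m` vertical lines `x = (W - m w) + k w` and the three horizontal lines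
`y = (H - 3h') + r h'`. Since `W - m w < w` and `H - 3h' < h'`, every rectangle meets one line of
each family, and two rectangles meeting the same vertical and the same horizontal line would
overlap. So `i ↦ (vertical line, horizontal line)` injects the `3m` rectangles into the `m × 3`
grid, hence is a bijection, and the rectangles on each vertical line form a group of three.
-/

open Finset

theorem Nat.ceil_lt_add_one_of_neg_one_lt {q : ℝ} (hq : -1 < q) : (⌈q⌉₊ : ℝ) < q + 1 := by
  rcases le_or_gt q 0 with h | h
  · rw [Nat.ceil_eq_zero.mpr h, Nat.cast_zero]
    linarith
  · exact Nat.ceil_lt_add_one h.le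

theorem exists_grid_line_mem_Ico {a s y : ℝ} {n : ℕ} (hs : 0 < s) (hy : a < y + s)
    (hyn : y + s ≤ a + n * s) : ∃ k : Fin n, a + k * s ∈ Set.Ico y (y + s) := by
  set q := (y - a) / s with hq
  have hqs : q * s = y - a := div_mul_cancel₀ _ hs.ne'
  have hceil : (⌈q⌉₊ : ℝ) < q + 1 := by
    refine Nat.ceil_lt_add_one_of_neg_one_lt ?_
    rw [hq, lt_div_iff₀ hs]
    linarith
  have hqn : q + 1 ≤ n := by
    rw [hq, div_add_one hs.ne', div_le_iff₀ hs]
    linarith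
  refine ⟨⟨⌈q⌉₊, by exact_mod_cast hceil.trans_le hqn⟩, ?_, ?_⟩
  · nlinarith [Nat.le_ceil q]
  · nlinarith

theorem card_filter_fst_eq_of_injective {α β γ : Type*} [Fintype α] [Fintype β] [Fintype γ]
    [DecidableEq β] (g : α → β) (r : α → γ) (hinj : Function.Injective fun i => (g i, r i))
    (hcard : Fintype.card α = Fintype.card β * Fintype.card γ) (k : β) :
    #{i | g i = k} = Fintype.card γ := by
  have hbij : Function.Bijective fun i => (g i, r i) :=
    (Fintype.bijective_iff_injective_and_card _).mpr ⟨hinj, by simp [hcard]⟩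
  rw [Finset.card_equiv (Equiv.ofBijective _ hbij) (t := {k} ×ˢ univ) (by simp [eq_comm])]
  simp

theorem three_per_column_packing_general (m : ℕ)
    (w h' h'' W H : ℝ) (hw : 0 < w) (hh' : 0 < h')
    (x y ht : Fin (3 * m) → ℝ)
    (hht : ∀ i, h' < ht i ∧ ht i < h'')
    (hin : ∀ i, 0 ≤ x i ∧ x i + w ≤ W ∧ 0 ≤ y i ∧ y i + ht i ≤ H)
    (hdisj : ∀ i j, i ≠ j →
      ¬(x i < x j + w ∧ x j < x i + w ∧ y i < y j + ht j ∧ y j < y i + ht i))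
    (hH3 : H - 3 * h' < h') (hWm : W - m * w < w) :
    ∃ g : Fin (3 * m) → Fin m,
      (∀ k, (Finset.univ.filter fun i => g i = k).card = 3) ∧
      (∀ k, ∃ c : ℝ, ∀ i, g i = k → x i ≤ c ∧ c ≤ x i + w) ∧
      (∀ i j, g i = g j → x i ≤ x j + w ∧ x j ≤ x i + w) := by
  choose col hcol using fun i => exists_grid_line_mem_Ico (n := m) hw
    (show W - m * w < x i + w by linarith [hin i]) (by linarith [hin i])
  choose row hrow using fun i => exists_grid_line_mem_Ico (n := 3) hh'
    (show H - 3 * h' < y i + h' by linarith [hin i]) (by push_cast; linarith [hin i, hht i])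
  have hx_overlap : ∀ i j, col i = col j → x i < x j + w := fun i j h => by
    linarith [(hcol i).1, h ▸ (hcol j).2]
  have hy_overlap : ∀ i j, row i = row j → y i < y j + ht j := fun i j h => by
    linarith [(hrow i).1, h ▸ (hrow j).2, hht j]
  have hinj : Function.Injective fun i => (col i, row i) := fun i j hij => by
    obtain ⟨hc, hr⟩ := Prod.mk.inj hij
    by_contra hne
    exact hdisj i j hne ⟨hx_overlap i j hc, hx_overlap j i hc.symm,
      hy_overlap i j hr, hy_overlap j i hr.symm⟩
  refine ⟨col, card_filter_fst_eq_of_injective col row hinj (by simp [mul_comm]),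
    fun k => ⟨W - m * w + k * w, fun i hi => hi ▸ ⟨(hcol i).1, (hcol i).2.le⟩⟩,
    fun i j h => ⟨(hx_overlap i j h).le, (hx_overlap j i h.symm).le⟩⟩

/-- If `3m` axis-parallel rectangles of common width `w` and heights `ht i` with
`h' < ht i < h''` are packed interior-disjointly into a `W × H` container where
`H < 4h'` (no four rectangles share an x-coordinate), `W < (m+1)w` (no `m+1`
rectangles share a y-coordinate), `H − 3h' < h'` and `W − mw < w`, then the
rectangles can be partitioned into `m` groups of exactly 3 such that the
rectangles in each group pairwise share an x-coordinate (equivalently, each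
group is stabbed by a common vertical line). -/
theorem three_per_column_packing (m : ℕ) (hm : 0 < m)
    (w h' h'' W H : ℝ) (hw : 0 < w) (hh' : 0 < h')
    (x y ht : Fin (3 * m) → ℝ)
    (hht : ∀ i, h' < ht i ∧ ht i < h'')
    (hin : ∀ i, 0 ≤ x i ∧ x i + w ≤ W ∧ 0 ≤ y i ∧ y i + ht i ≤ H)
    (hdisj : ∀ i j, i ≠ j →
      ¬(x i < x j + w ∧ x j < x i + w ∧ y i < y j + ht j ∧ y j < y i + ht i))
    (hH : H < 4 * h') (hW : W < (m + 1) * w)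
    (hH3 : H - 3 * h' < h') (hWm : W - m * w < w) :
    ∃ g : Fin (3 * m) → Fin m,
      (∀ k, (Finset.univ.filter fun i => g i = k).card = 3) ∧
      (∀ k, ∃ c : ℝ, ∀ i, g i = k → x i ≤ c ∧ c ≤ x i + w) ∧
      (∀ i j, g i = g j → x i ≤ x j + w ∧ x j ≤ x i + w) :=
  three_per_column_packing_general m w h' h'' W H hw hh' x y ht hht hin hdisj hH3 hWm
end

section
/- Let f : {1,…,k} → ℤ_{>0} denote the lengths of the horizontal segments of TR with ∑ f(i) = b + 1 (ordered left to right), and define the area lower bound A(f) = f(1)(f(1)+1)/2 + ∑_{i=2}^{k} [(f(i)+1)(f(i)+2)/2 − 1]. Then A(f) ≥ 1 + (3/2)b + (1/2)·min{∑ x_i² : x ∈ ℤ_{>0}^{a+1}, ∑ x_i = b}, where a + 1 = k is the number of segments. -/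
/-!
Since `∑ fᵢ = b + 1`, the bound equals `1 + (3/2)b + (1/2)∑ gᵢ²`, where `g` is `f` with its first
entry lowered by one (the unit piece split off the first segment), so `∑ gᵢ = b`. It remains to see
`M ≤ ∑ gᵢ²` although `g₀` may vanish: `M` exists, so `b ≥ a + 1`, and moving a unit from an entry
`≥ 2` into a zero entry keeps the sum and strictly lowers the sum of squares.
-/

open Finset Function

variable {ι : Type*} [Fintype ι] [DecidableEq ι]

theorem Fintype.sum_add_add_eq_of_eq_off_pair {M : Type*} [AddCommMonoid M] {g h : ι → M}
    {i j : ι} (hij : i ≠ j) (hgh : ∀ k, k ≠ i → k ≠ j → g k = h k) :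
    ∑ k, g k + (h i + h j) = ∑ k, h k + (g i + g j) := by
  have hj : j ∈ univ.erase i := mem_erase.2 ⟨hij.symm, mem_univ j⟩
  have hrest : ∑ k ∈ (univ.erase i).erase j, g k = ∑ k ∈ (univ.erase i).erase j, h k :=
    Finset.sum_congr rfl fun k hk =>
      hgh k (ne_of_mem_erase (mem_of_mem_erase hk)) (ne_of_mem_erase hk)
  rw [← add_sum_erase _ g (mem_univ i), ← add_sum_erase _ g hj,
    ← add_sum_erase _ h (mem_univ i), ← add_sum_erase _ h hj, hrest]
  abel

def unitTransfer (x : ι → ℕ) (i j : ι) : ι → ℕ :=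
  update (update x i (x i + 1)) j (x j - 1)

section unitTransfer

variable {x : ι → ℕ} {i j : ι}

omit [Fintype ι] in
theorem unitTransfer_apply_of_ne {k : ι} (hi : k ≠ i) (hj : k ≠ j) :
    unitTransfer x i j k = x k := by
  simp [unitTransfer, hi, hj]

omit [Fintype ι] in
theorem unitTransfer_apply_left (hij : i ≠ j) : unitTransfer x i j i = x i + 1 := by
  simp [unitTransfer, hij]

omit [Fintype ι] in
theorem unitTransfer_apply_right : unitTransfer x i j j = x j - 1 := by
  simp [unitTransfer]

theorem sum_unitTransfer (hij : i ≠ j) (hj : 0 < x j) :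
    ∑ k, unitTransfer x i j k = ∑ k, x k := by
  have := Fintype.sum_add_add_eq_of_eq_off_pair hij
    (fun k hi hj => unitTransfer_apply_of_ne (x := x) hi hj)
  rw [unitTransfer_apply_left hij, unitTransfer_apply_right] at this
  omega

theorem sum_sq_unitTransfer_lt (hij : i ≠ j) (hlt : x i + 1 < x j) :
    ∑ k, unitTransfer x i j k ^ 2 < ∑ k, x k ^ 2 := by
  have := Fintype.sum_add_add_eq_of_eq_off_pair (g := fun k => unitTransfer x i j k ^ 2)
    (h := fun k => x k ^ 2) hij (fun k hi hj => by rw [unitTransfer_apply_of_ne hi hj])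
  simp only [unitTransfer_apply_left hij, unitTransfer_apply_right] at this
  obtain ⟨d, hd⟩ : ∃ d, x j = x i + 2 + d := ⟨x j - (x i + 2), by omega⟩
  rw [hd, show x i + 2 + d - 1 = x i + 1 + d by omega] at this
  nlinarith

end unitTransfer

theorem exists_pos_sum_eq_sum_sq_le (x : ι → ℕ) (hx : Fintype.card ι ≤ ∑ k, x k) :
    ∃ y : ι → ℕ, (∀ k, 0 < y k) ∧ ∑ k, y k = ∑ k, x k ∧ ∑ k, y k ^ 2 ≤ ∑ k, x k ^ 2 := by
  induction hn : ∑ k, x k ^ 2 using Nat.strong_induction_on generalizing x with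
  | _ n ih =>
  by_cases hpos : ∀ k, 0 < x k
  · exact ⟨x, hpos, rfl, hn.le⟩
  obtain ⟨i, hi⟩ : ∃ i, x i = 0 := by simpa using hpos
  obtain ⟨j, hj⟩ : ∃ j, 2 ≤ x j := by
    by_contra! hsmall
    have : ∑ k, x k < ∑ _k : ι, 1 :=
      sum_lt_sum (fun k _ => Nat.lt_succ_iff.1 (hsmall k)) ⟨i, mem_univ i, by omega⟩
    rw [← Fintype.card_eq_sum_ones] at this
    omega
  have hij : i ≠ j := by rintro rfl; omega
  have hsum := sum_unitTransfer (x := x) hij (by omega)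
  have hsq := sum_sq_unitTransfer_lt (x := x) hij (by omega)
  obtain ⟨y, hy, hysum, hysq⟩ := ih _ (hn ▸ hsq) (unitTransfer x i j) (hsum ▸ hx) rfl
  exact ⟨y, hy, hysum.trans hsum, hysq.trans (hn ▸ hsq.le)⟩

theorem sum_update_pred (f : ι → ℕ) (i₀ : ι) (h : 0 < f i₀) :
    ∑ k, update f i₀ (f i₀ - 1) k = ∑ k, f k - 1 := by
  rw [sum_update_of_mem (mem_univ i₀), ← add_sum_erase _ f (mem_univ i₀),
    sdiff_singleton_eq_erase]
  omega

theorem area_bound_eq (f : ι → ℕ) (i₀ : ι) (h : 0 < f i₀) :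
    (f i₀ : ℚ) * ((f i₀ : ℚ) + 1) / 2 +
        ∑ i ∈ univ.erase i₀, (((f i : ℚ) + 1) * ((f i : ℚ) + 2) / 2 - 1) =
      1 + 3 / 2 * (((∑ k, f k : ℕ) : ℚ) - 1) +
        ((∑ k, update f i₀ (f i₀ - 1) k ^ 2 : ℕ) : ℚ) / 2 := by
  have hsq : ∑ k, update f i₀ (f i₀ - 1) k ^ 2 =
      (f i₀ - 1) ^ 2 + ∑ k ∈ univ.erase i₀, f k ^ 2 := by
    rw [← add_sum_erase _ _ (mem_univ i₀), update_self]
    congr 1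
    exact Finset.sum_congr rfl fun k hk => by rw [update_of_ne (ne_of_mem_erase hk)]
  have hterm : ∀ i ∈ univ.erase i₀, ((f i : ℚ) + 1) * ((f i : ℚ) + 2) / 2 - 1 =
      (f i : ℚ) ^ 2 / 2 + 3 / 2 * f i := fun i _ => by ring
  rw [hsq, ← add_sum_erase _ f (mem_univ i₀), sum_congr rfl hterm, sum_add_distrib,
    ← sum_div, ← mul_sum]
  push_cast [Nat.cast_sub h]
  ring

/-- Let `f : Fin (a+1) → ℤ_{>0}` be the lengths of the horizontal segments of TR
with `∑ f i = b + 1`, and let `A(f) = f₀(f₀+1)/2 + ∑_{i≠0} [(fᵢ+1)(fᵢ+2)/2 − 1]`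
be the area lower bound. Then `A(f) ≥ 1 + (3/2)b + (1/2)·M`, where `M` is the
minimum of `∑ xᵢ²` over positive integer vectors `x ∈ ℤ_{>0}^{a+1}` with
`∑ xᵢ = b`. -/
theorem area_lower_bound_via_sum_of_squares (a b : ℕ) (f : Fin (a + 1) → ℕ)
    (hf : ∀ i, 0 < f i) (hsum : ∑ i, f i = b + 1) (M : ℕ)
    (hM : IsLeast {s : ℕ | ∃ x : Fin (a + 1) → ℕ, (∀ i, 0 < x i) ∧
        (∑ i, x i = b) ∧ s = ∑ i, (x i) ^ 2} M) :
    (1 : ℚ) + 3 / 2 * b + (M : ℚ) / 2 ≤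
      (f 0 : ℚ) * ((f 0 : ℚ) + 1) / 2 +
        ∑ i ∈ Finset.univ.erase (0 : Fin (a + 1)),
          (((f i : ℚ) + 1) * ((f i : ℚ) + 2) / 2 - 1) := by
  set g := update f 0 (f 0 - 1)
  have hg : ∑ i, g i = b := by rw [sum_update_pred f 0 (hf 0), hsum, Nat.add_sub_cancel]
  obtain ⟨x, hx, hxsum, -⟩ := hM.1
  have hcard : Fintype.card (Fin (a + 1)) ≤ ∑ i, g i := by
    simpa [hg, hxsum] using card_nsmul_le_sum univ x 1 fun i _ => hx i
  obtain ⟨y, hy, hysum, hysq⟩ := exists_pos_sum_eq_sum_sq_le g hcard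
  have hMg : M ≤ ∑ i, g i ^ 2 := (hM.2 ⟨y, hy, hysum.trans hg, rfl⟩).trans hysq
  rw [area_bound_eq f 0 (hf 0), hsum, Nat.cast_succ, add_sub_cancel_right]
  linarith [(Nat.cast_le (α := ℚ)).2 hMg]
end

section
/- In any x-monotone lattice polygon P of minimum area, every grid column intersected by P properly intersects exactly one horizontal edge of the upper hull and one of the lower hull, and any pair of horizontal edges (one from the upper hull, one from the lower hull) shares at most one grid column; moreover the height of P is at most n, the number of vertices. -/
/-- Cross product of two planar integer vectors. -/
def cross (d e : ℤ × ℤ) : ℤ := d.1 * e.2 - d.2 * e.1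

/-- Membership in an axis-parallel lattice segment with endpoints `a`, `b`. -/
def onSeg (a b p : ℤ × ℤ) : Prop :=
  min a.1 b.1 ≤ p.1 ∧ p.1 ≤ max a.1 b.1 ∧ min a.2 b.2 ≤ p.2 ∧ p.2 ≤ max a.2 b.2

/-- A simple rectilinear lattice polygon with `n` vertices: all edges are
axis-parallel, consecutive edges are perpendicular, and non-adjacent edges are
disjoint (adjacent edges meet only in their common endpoint). -/
structure RectPolygon (n : ℕ) where
  v : ZMod n → ℤ × ℤ
  nondeg : ∀ i, v (i + 1) ≠ v i
  axis : ∀ i, (v (i + 1)).1 = (v i).1 ∨ (v (i + 1)).2 = (v i).2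
  alt : ∀ i, ((v (i + 1)).1 = (v i).1 ↔ (v (i + 2)).2 = (v (i + 1)).2)
  simple : ∀ i j : ZMod n, j ≠ i → ∀ p : ℤ × ℤ,
    onSeg (v i) (v (i + 1)) p → onSeg (v j) (v (j + 1)) p →
    (j = i + 1 ∧ p = v j) ∨ (i = j + 1 ∧ p = v i)

namespace RectPolygon

variable {n : ℕ}

/-- Vector of edge `i` (from vertex `i` to vertex `i+1`). -/
def dvec (P : RectPolygon n) (i : ZMod n) : ℤ × ℤ := P.v (i + 1) - P.v i

/-- The turn at vertex `i` is a left (+90°, convex) turn. -/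
def convexAt (P : RectPolygon n) (i : ZMod n) : Prop := 0 < cross (P.dvec (i - 1)) (P.dvec i)

/-- The turn at vertex `i` is a right (−90°, reflex) turn. -/
def reflexAt (P : RectPolygon n) (i : ZMod n) : Prop := cross (P.dvec (i - 1)) (P.dvec i) < 0

def horiz (P : RectPolygon n) (i : ZMod n) : Prop := (P.v (i + 1)).2 = (P.v i).2

def vert (P : RectPolygon n) (i : ZMod n) : Prop := (P.v (i + 1)).1 = (P.v i).1

/-- Signed x-extent of edge `i`. -/
def sx (P : RectPolygon n) (i : ZMod n) : ℤ := (P.v (i + 1)).1 - (P.v i).1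

/-- Signed y-extent of edge `i`. -/
def sy (P : RectPolygon n) (i : ZMod n) : ℤ := (P.v (i + 1)).2 - (P.v i).2

/-- Length of edge `i`. -/
def elen (P : RectPolygon n) (i : ZMod n) : ℤ :=
  |(P.v (i + 1)).1 - (P.v i).1| + |(P.v (i + 1)).2 - (P.v i).2|

section
variable [NeZero n]

/-- Counterclockwise orientation (positive shoelace signed area). -/
def ccw (P : RectPolygon n) : Prop := 0 < ∑ i : ZMod n, cross (P.v i) (P.v (i + 1))

/-- The enclosed area of a ccw polygon (shoelace formula); for a rectilinear
lattice polygon this is the number of interior unit grid cells. -/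
def area (P : RectPolygon n) : ℤ := (∑ i : ZMod n, cross (P.v i) (P.v (i + 1))) / 2

/-- Perimeter: total length of all edges. -/
def perimeter (P : RectPolygon n) : ℤ := ∑ i : ZMod n, P.elen i

def maxX (P : RectPolygon n) : ℤ := Finset.univ.sup' Finset.univ_nonempty fun i : ZMod n => (P.v i).1
def minX (P : RectPolygon n) : ℤ := Finset.univ.inf' Finset.univ_nonempty fun i : ZMod n => (P.v i).1
def maxY (P : RectPolygon n) : ℤ := Finset.univ.sup' Finset.univ_nonempty fun i : ZMod n => (P.v i).2
def minY (P : RectPolygon n) : ℤ := Finset.univ.inf' Finset.univ_nonempty fun i : ZMod n => (P.v i).2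

/-- Width of the bounding box (a single unit edge gives width 1). -/
def width (P : RectPolygon n) : ℤ := P.maxX - P.minX

/-- Height of the bounding box. -/
def height (P : RectPolygon n) : ℤ := P.maxY - P.minY

/-- Area of the bounding box. -/
def bboxArea (P : RectPolygon n) : ℤ := P.width * P.height

end

/-- A simple rectilinear polygon is x-monotone iff the cyclic sequence of
x-directions of its horizontal edges has exactly two reversals. -/
def IsXMonotone (P : RectPolygon n) : Prop :=
  {i : ZMod n | P.horiz i ∧ P.sx i * P.sx (i + 2) < 0}.ncard = 2

def IsYMonotone (P : RectPolygon n) : Prop :=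
  {i : ZMod n | P.vert i ∧ P.sy i * P.sy (i + 2) < 0}.ncard = 2

def IsXYMonotone (P : RectPolygon n) : Prop := P.IsXMonotone ∧ P.IsYMonotone

/-- In a ccw x-monotone polygon, a reflex vertex lies on the upper chain iff its
adjacent horizontal edge points leftwards. -/
def upperReflex (P : RectPolygon n) (i : ZMod n) : Prop :=
  P.reflexAt i ∧ ((P.horiz (i - 1) ∧ P.sx (i - 1) < 0) ∨ (P.horiz i ∧ P.sx i < 0))

def lowerReflex (P : RectPolygon n) (i : ZMod n) : Prop :=
  P.reflexAt i ∧ ((P.horiz (i - 1) ∧ 0 < P.sx (i - 1)) ∨ (P.horiz i ∧ 0 < P.sx i))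

/-- Number of reflex vertices on the upper chain T. -/
noncomputable def rT (P : RectPolygon n) : ℕ := {i : ZMod n | P.upperReflex i}.ncard

/-- Number of reflex vertices on the lower chain B. -/
noncomputable def rB (P : RectPolygon n) : ℕ := {i : ZMod n | P.lowerReflex i}.ncard

end RectPolygon

/-- The block (LR)^k of an angle sequence (`true` = L, `false` = R). -/
def LRblock (k : ℕ) : List Bool := (List.replicate k [true, false]).flatten

/-- `P` realizes the angle sequence `S` via a counterclockwise boundary walk. -/
def realizes {m : ℕ} [NeZero m] (S : List Bool) (P : RectPolygon m) : Prop :=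
  m = S.length ∧ P.ccw ∧ ∀ i : Fin S.length,
    ((S.get i = true) ↔ P.convexAt ((i : ℕ) : ZMod m)) ∧
    ((S.get i = false) ↔ P.reflexAt ((i : ℕ) : ZMod m))

instance (k : ℕ) : NeZero (k + 4) := ⟨by omega⟩

/-- The grid column `(c, c+1)` properly intersects edge `i` of `P`. -/
def spansColumn {n : ℕ} (P : RectPolygon n) (i : ZMod n) (c : ℤ) : Prop :=
  min (P.v i).1 (P.v (i + 1)).1 ≤ c ∧ c + 1 ≤ max (P.v i).1 (P.v (i + 1)).1

/-!
By the shoelace formula, the area of an x-monotone rectilinear polygon is the sum, over the grid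
columns it spans, of the column height: the vertical distance between the unique leftward (upper)
and the unique rightward (lower) horizontal edge crossing the column. Uniqueness holds because two
rightward crossings of one column would force four reversals of direction among the horizontal
edges. Simplicity makes every column height nonzero and forbids a sign change between adjacent
columns, so the orientation makes all of them positive.

If an upper and a lower edge shared two columns, no vertex would lie on the vertical line between
these columns; if the height exceeded `n`, some horizontal line strictly inside the bounding box
would carry no vertex. Squashing the unit strip next to such a line keeps the polygon simple,
x-monotone and its angle sequence unchanged, but strictly lowers the area.
-/

open Finset

theorem Nat.exists_step_of_not {p : ℕ → Prop} {a b : ℕ} (hab : a ≤ b) (ha : p a) (hb : ¬ p b) :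
    ∃ r, a ≤ r ∧ r < b ∧ p r ∧ ¬ p (r + 1) := by
  induction b, hab using Nat.le_induction with
  | base => exact absurd ha hb
  | succ b hab ih =>
    by_cases h : p b
    · exact ⟨b, hab, b.lt_succ_self, h, hb⟩
    · obtain ⟨r, h₁, h₂, h₃⟩ := ih h
      exact ⟨r, h₁, by omega, h₃⟩

theorem forall_eq_of_not_step_down (f : ℕ → ℤ) {X : ℤ} {M : ℕ} (h₀ : f 0 = X) (hM : f M = X)
    (hlo : ∀ r < M, X ≤ f r → X ≤ f (r + 1)) (hhi : ∀ r < M, X < f r → X < f (r + 1)) :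
    ∀ r ≤ M, f r = X := by
  intro r hr
  by_contra hne
  rcases lt_or_gt_of_ne hne with h | h
  · obtain ⟨r', -, hr', h₁, h₂⟩ :=
      Nat.exists_step_of_not (p := (X ≤ f ·)) (Nat.zero_le r) h₀.ge h.not_ge
    exact h₂ (hlo r' (by omega) h₁)
  · obtain ⟨r', -, hr', h₁, h₂⟩ := Nat.exists_step_of_not (p := (X < f ·)) hr h hM.le.not_gt
    exact h₂ (hhi r' hr' h₁)

theorem Int.iff_of_forall_iff_succ {p : ℤ → Prop} {L R : ℤ}
    (h : ∀ c, L ≤ c → c + 1 < R → (p c ↔ p (c + 1))) {a b : ℤ}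
    (ha : L ≤ a) (ha' : a < R) (hb : L ≤ b) (hb' : b < R) : p a ↔ p b := by
  suffices key : ∀ a b, L ≤ a → a ≤ b → b < R → (p a ↔ p b) by
    rcases le_total a b with hab | hab
    · exact key a b ha hab hb'
    · exact (key b a hb hab ha').symm
  intro a b ha hab hb
  induction b, hab using Int.leInduction with
  | base => rfl
  | succ b hab ih => exact (ih (by omega)).trans (h b (by omega) hb)

theorem one_le_card_sign_changes (s : ℕ → ℤ) (hs : ∀ r, s r ≠ 0) {a b : ℕ} (hab : a ≤ b)
    (h : s a * s b < 0) : 1 ≤ #{r ∈ Finset.Ico a b | s r * s (r + 1) < 0} := by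
  obtain ⟨r, h₁, h₂, hr, hr'⟩ := Nat.exists_step_of_not (p := fun r => 0 < s a * s r) hab
    (mul_self_pos.mpr (hs a)) h.not_gt
  refine Finset.card_pos.mpr ⟨r, Finset.mem_filter.mpr ⟨Finset.mem_Ico.mpr ⟨h₁, h₂⟩, ?_⟩⟩
  rcases lt_or_gt_of_ne (hs a) with ha | ha <;> rcases lt_or_gt_of_ne (hs (r + 1)) with hr₁ | hr₁
  · exact absurd (mul_pos_of_neg_of_neg ha hr₁) hr'
  · exact mul_neg_of_neg_of_pos (neg_of_mul_pos_right hr ha.le) hr₁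
  · exact mul_neg_of_pos_of_neg (pos_of_mul_pos_right hr ha.le) hr₁
  · exact absurd (mul_pos ha hr₁) hr'

theorem Int.sum_Ico_ite_lt {L R a : ℤ} (hL : L ≤ a) (hR : a ≤ R) :
    ∑ c ∈ Finset.Ico L R, (if c < a then (1 : ℤ) else 0) = a - L := by
  rw [Finset.sum_boole, Finset.Ico_filter_lt, min_eq_right hR, Int.card_Ico,
    Int.toNat_of_nonneg (by omega)]

theorem ZMod.natCast_inj_of_lt {n r m : ℕ} (hr : r < n) (hm : m < n)
    (h : (r : ZMod n) = m) : r = m := by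
  simpa [ZMod.val_natCast_of_lt hr, ZMod.val_natCast_of_lt hm] using congrArg ZMod.val h

theorem ZMod.natCast_add_one_ne_zero {n r : ℕ} (h : r + 1 < n) : (r : ZMod n) + 1 ≠ 0 := by
  intro h0
  have := Nat.le_of_dvd r.succ_pos ((ZMod.natCast_eq_zero_iff _ _).mp (by push_cast; exact h0))
  omega

theorem sign_cross_eq_of_sign_eq {d e d' e' : ℤ × ℤ} (hd : d.1 = 0 ∨ d.2 = 0)
    (h₁ : d.1.sign = d'.1.sign) (h₂ : d.2.sign = d'.2.sign)
    (h₃ : e.1.sign = e'.1.sign) (h₄ : e.2.sign = e'.2.sign) :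
    (cross d e).sign = (cross d' e').sign := by
  rcases hd with h | h
  · have h' : d'.1 = 0 := Int.sign_eq_zero_iff_zero.mp (by rw [← h₁, h, Int.sign_zero])
    simp only [cross, h, h', zero_mul, zero_sub, Int.sign_neg, Int.sign_mul, h₂, h₃]
  · have h' : d'.2 = 0 := Int.sign_eq_zero_iff_zero.mp (by rw [← h₂, h, Int.sign_zero])
    simp only [cross, h, h', zero_mul, sub_zero, Int.sign_mul, h₁, h₄]

theorem min_mem_range {ι : Type*} (f : ι → ℤ) (i j : ι) : min (f i) (f j) ∈ Set.range f := by
  rcases min_choice (f i) (f j) with h | h <;> rw [h] <;> exact ⟨_, rfl⟩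

theorem max_mem_range {ι : Type*} (f : ι → ℤ) (i j : ι) : max (f i) (f j) ∈ Set.range f := by
  rcases max_choice (f i) (f j) with h | h <;> rw [h] <;> exact ⟨_, rfl⟩

/-- The images under `f` of two intervals with endpoints in `S` meet only in the image of their
intersection; this is what keeps `RectPolygon.squeeze` simple. -/
structure IntervalFaithful (f : ℤ → ℤ) (S : Set ℤ) : Prop where
  mono : Monotone f
  exists_mem_inter : ∀ u₁ ∈ S, ∀ w₁ ∈ S, ∀ u₂ ∈ S, ∀ w₂ ∈ S, ∀ z, f u₁ ≤ z → z ≤ f w₁ →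
    f u₂ ≤ z → z ≤ f w₂ → ∃ a, u₁ ≤ a ∧ a ≤ w₁ ∧ u₂ ≤ a ∧ a ≤ w₂ ∧ f a = z

namespace IntervalFaithful

variable {f : ℤ → ℤ} {S : Set ℤ}

theorem injOn (hf : IntervalFaithful f S) : Set.InjOn f S := fun a ha b hb h => by
  obtain ⟨c, h₁, h₂, h₃, h₄, -⟩ :=
    hf.exists_mem_inter a ha a ha b hb b hb (f a) le_rfl le_rfl h.ge h.le
  omega

theorem sign_sub (hf : IntervalFaithful f S) {a b : ℤ} (ha : a ∈ S) (hb : b ∈ S) :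
    (f b - f a).sign = (b - a).sign := by
  rcases lt_trichotomy a b with h | rfl | h
  · have : f a < f b := (hf.mono h.le).lt_of_ne fun e => h.ne (hf.injOn ha hb e)
    rw [Int.sign_eq_one_of_pos (by omega), Int.sign_eq_one_of_pos (by omega)]
  · simp
  · have : f b < f a := (hf.mono h.le).lt_of_ne fun e => h.ne (hf.injOn hb ha e)
    rw [Int.sign_eq_neg_one_of_neg (by omega), Int.sign_eq_neg_one_of_neg (by omega)]

protected theorem id : IntervalFaithful id S :=
  ⟨monotone_id, fun _ _ _ _ _ _ _ _ z h₁ h₂ h₃ h₄ => ⟨z, h₁, h₂, h₃, h₄, rfl⟩⟩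

end IntervalFaithful

/-- Collapses the unit strip between `s` and `s + 1` to the line `s`. -/
def squash (s x : ℤ) : ℤ := x - if s < x then 1 else 0

theorem intervalFaithful_squash {s : ℤ} {S : Set ℤ} (hs : s + 1 ∉ S) :
    IntervalFaithful (squash s) S := by
  refine ⟨fun a b h => by unfold squash; split_ifs <;> omega,
    fun u₁ hu₁ w₁ hw₁ u₂ hu₂ w₂ hw₂ z h₁ h₂ h₃ h₄ => ⟨if z ≤ s then z else z + 1, ?_⟩⟩
  have : u₁ ≠ s + 1 := fun h => hs (h ▸ hu₁)
  have : w₁ ≠ s + 1 := fun h => hs (h ▸ hw₁)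
  have : u₂ ≠ s + 1 := fun h => hs (h ▸ hu₂)
  have : w₂ ≠ s + 1 := fun h => hs (h ▸ hw₂)
  unfold squash at *
  split_ifs at * <;> omega

namespace RectPolygon

section Basic

variable {n : ℕ} (P : RectPolygon n)

theorem vert_iff_not_horiz (i : ZMod n) : P.vert i ↔ ¬ P.horiz i :=
  ⟨fun hv hh => P.nondeg i (Prod.ext hv hh), (P.axis i).resolve_right⟩

theorem horiz_add_one_iff (i : ZMod n) : P.horiz (i + 1) ↔ ¬ P.horiz i := by
  rw [← vert_iff_not_horiz, vert, horiz, P.alt i, add_assoc, one_add_one_eq_two]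

theorem horiz_add_natCast_iff (a : ZMod n) (m : ℕ) : P.horiz (a + m) ↔ (P.horiz a ↔ Even m) := by
  induction m with
  | zero => simp
  | succ m ih =>
    rw [Nat.cast_succ, ← add_assoc, horiz_add_one_iff, ih, Nat.even_add_one]
    tauto

theorem horiz_iff_fst_ne (i : ZMod n) : P.horiz i ↔ (P.v (i + 1)).1 ≠ (P.v i).1 :=
  ((P.vert_iff_not_horiz i).not.trans not_not).symm

theorem sx_ne_zero_iff (i : ZMod n) : P.sx i ≠ 0 ↔ P.horiz i := by
  rw [horiz_iff_fst_ne, sx, sub_ne_zero]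

theorem sy_eq_zero_iff (i : ZMod n) : P.sy i = 0 ↔ P.horiz i := by
  rw [sy, horiz, sub_eq_zero]

theorem exists_horiz_of_vertex (k : ZMod n) : ∃ e, P.horiz e ∧ (k = e ∨ k = e + 1) := by
  by_cases hk : P.horiz k
  · exact ⟨k, hk, Or.inl rfl⟩
  · have h := P.horiz_add_one_iff (k - 1)
    rw [sub_add_cancel] at h
    exact ⟨k - 1, not_not.mp (mt h.mpr hk), Or.inr (sub_add_cancel k 1).symm⟩

theorem eq_of_mem_onSeg_of_horiz_iff {e e' : ZMod n} {p : ℤ × ℤ} (he : P.horiz e ↔ P.horiz e')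
    (hp : onSeg (P.v e) (P.v (e + 1)) p) (hp' : onSeg (P.v e') (P.v (e' + 1)) p) : e = e' := by
  by_contra hne
  rcases P.simple e e' (Ne.symm hne) p hp hp' with ⟨rfl, -⟩ | ⟨rfl, -⟩
  · have := P.horiz_add_one_iff e
    tauto
  · have := P.horiz_add_one_iff e'
    tauto

def CrossesRight (k : ZMod n) (c : ℤ) : Prop := (P.v k).1 ≤ c ∧ c < (P.v (k + 1)).1

def CrossesLeft (k : ZMod n) (c : ℤ) : Prop := (P.v (k + 1)).1 ≤ c ∧ c < (P.v k).1

instance (k : ZMod n) (c : ℤ) : Decidable (P.CrossesRight k c) :=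
  inferInstanceAs (Decidable (_ ∧ _))

instance (k : ZMod n) (c : ℤ) : Decidable (P.CrossesLeft k c) :=
  inferInstanceAs (Decidable (_ ∧ _))

/-- Signed number of times edge `k` crosses the column `(c, c + 1)` from left to right. -/
def crossing (k : ZMod n) (c : ℤ) : ℤ :=
  (if c < (P.v (k + 1)).1 then 1 else 0) - (if c < (P.v k).1 then 1 else 0)

theorem crossing_eq_ite (k : ZMod n) (c : ℤ) :
    P.crossing k c =
      (if P.CrossesRight k c then 1 else 0) - (if P.CrossesLeft k c then 1 else 0) := by
  unfold crossing CrossesRight CrossesLeft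
  split_ifs <;> omega

variable {P}

theorem eq_of_mem_onSeg_of_ne_corner {e e' : ZMod n} {p : ℤ × ℤ}
    (hp : onSeg (P.v e) (P.v (e + 1)) p) (hp' : onSeg (P.v e') (P.v (e' + 1)) p)
    (he : P.horiz e → (P.v e).1 ≠ p.1 ∧ (P.v (e + 1)).1 ≠ p.1)
    (he' : P.horiz e' → (P.v e').1 ≠ p.1 ∧ (P.v (e' + 1)).1 ≠ p.1) : e = e' := by
  by_contra hne
  rcases P.simple e e' (Ne.symm hne) p hp hp' with ⟨rfl, rfl⟩ | ⟨rfl, rfl⟩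
  · exact (fun h => (he' h).1 rfl) ((P.horiz_add_one_iff e).mpr fun h => (he h).2 rfl)
  · exact (fun h => (he h).1 rfl) ((P.horiz_add_one_iff e').mpr fun h => (he' h).2 rfl)

theorem eq_add_two_of_vertical_run {e e' : ZMod n} (he : P.horiz e) (he' : P.horiz e') {M : ℕ}
    (hM : e + 1 + M = e') (hrun : ∀ r ≤ M, (P.v (e + 1 + r)).1 = (P.v (e + 1)).1) :
    e' = e + 2 := by
  have hM₀ : M ≠ 0 := by
    rintro rfl
    rw [Nat.cast_zero, add_zero] at hM
    exact (P.horiz_add_one_iff e).mp (hM ▸ he') he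
  have hM₂ : M < 2 := by
    by_contra hM₂
    have a := hrun 1 (by omega)
    have b := hrun 2 (by omega)
    rw [Nat.cast_one] at a
    rw [Nat.cast_ofNat] at b
    have h₁ : P.vert (e + 1) := a
    have h₂ : P.vert (e + 1 + 1) := by rw [vert, show e + 1 + 1 + 1 = e + 1 + 2 by ring, b, a]
    exact (P.vert_iff_not_horiz _).mp h₂ <|
      (P.horiz_add_one_iff _).mpr ((P.vert_iff_not_horiz _).mp h₁)
  obtain rfl : M = 1 := by omega
  rw [← hM, Nat.cast_one, add_assoc, one_add_one_eq_two]

theorem CrossesRight.horiz {k : ZMod n} {c : ℤ} (h : P.CrossesRight k c) : P.horiz k :=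
  (P.horiz_iff_fst_ne k).mpr (by obtain ⟨h₁, h₂⟩ := h; omega)

theorem CrossesLeft.horiz {k : ZMod n} {c : ℤ} (h : P.CrossesLeft k c) : P.horiz k :=
  (P.horiz_iff_fst_ne k).mpr (by obtain ⟨h₁, h₂⟩ := h; omega)

theorem crossesRight_iff {i : ZMod n} {c : ℤ} :
    P.horiz i ∧ 0 < P.sx i ∧ spansColumn P i c ↔ P.CrossesRight i c := by
  refine ⟨fun ⟨_, hs, h₁, h₂⟩ => ?_, fun h => ⟨h.horiz, ?_, ?_⟩⟩ <;>
    simp only [CrossesRight, sx, spansColumn] at * <;> omega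

theorem crossesLeft_iff {i : ZMod n} {c : ℤ} :
    P.horiz i ∧ P.sx i < 0 ∧ spansColumn P i c ↔ P.CrossesLeft i c := by
  refine ⟨fun ⟨_, hs, h₁, h₂⟩ => ?_, fun h => ⟨h.horiz, ?_, ?_⟩⟩ <;>
    simp only [CrossesLeft, sx, spansColumn] at * <;> omega

end Basic

section Squeeze

variable {n : ℕ}

def SameAngles (P Q : RectPolygon n) : Prop :=
  ∀ i, (P.convexAt i ↔ Q.convexAt i) ∧ (P.reflexAt i ↔ Q.reflexAt i)

variable (P : RectPolygon n) {f g : ℤ → ℤ}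

def squeeze (hf : IntervalFaithful f (Set.range fun k => (P.v k).1))
    (hg : IntervalFaithful g (Set.range fun k => (P.v k).2)) : RectPolygon n where
  v k := (f (P.v k).1, g (P.v k).2)
  nondeg k h := P.nondeg k (Prod.ext (hf.injOn ⟨_, rfl⟩ ⟨_, rfl⟩ (congrArg Prod.fst h))
    (hg.injOn ⟨_, rfl⟩ ⟨_, rfl⟩ (congrArg Prod.snd h)))
  axis k := (P.axis k).imp (congrArg f) (congrArg g)
  alt k := by
    rw [hf.injOn.eq_iff ⟨_, rfl⟩ ⟨_, rfl⟩, hg.injOn.eq_iff ⟨_, rfl⟩ ⟨_, rfl⟩]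
    exact P.alt k
  simple k l hne := by
    rintro ⟨q₁, q₂⟩ ⟨hk₁, hk₂, hk₃, hk₄⟩ ⟨hl₁, hl₂, hl₃, hl₄⟩
    simp only [← hf.mono.map_min, ← hf.mono.map_max, ← hg.mono.map_min, ← hg.mono.map_max]
      at hk₁ hk₂ hk₃ hk₄ hl₁ hl₂ hl₃ hl₄
    have mn := min_mem_range (fun k => (P.v k).1)
    have mx := max_mem_range (fun k => (P.v k).1)
    have mn' := min_mem_range (fun k => (P.v k).2)
    have mx' := max_mem_range (fun k => (P.v k).2)
    obtain ⟨a, ha₁, ha₂, ha₃, ha₄, rfl⟩ :=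
      hf.exists_mem_inter _ (mn k (k + 1)) _ (mx k (k + 1)) _ (mn l (l + 1)) _ (mx l (l + 1))
        q₁ hk₁ hk₂ hl₁ hl₂
    obtain ⟨b, hb₁, hb₂, hb₃, hb₄, rfl⟩ :=
      hg.exists_mem_inter _ (mn' k (k + 1)) _ (mx' k (k + 1)) _ (mn' l (l + 1)) _ (mx' l (l + 1))
        q₂ hk₃ hk₄ hl₃ hl₄
    rcases P.simple k l hne (a, b) ⟨ha₁, ha₂, hb₁, hb₂⟩ ⟨ha₃, ha₄, hb₃, hb₄⟩ with ⟨h, hp⟩ | ⟨h, hp⟩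
    · exact Or.inl ⟨h, by rw [← hp]⟩
    · exact Or.inr ⟨h, by rw [← hp]⟩

variable {P}
variable (hf : IntervalFaithful f (Set.range fun k => (P.v k).1))
  (hg : IntervalFaithful g (Set.range fun k => (P.v k).2))

theorem sign_sx_squeeze (k : ZMod n) : ((P.squeeze hf hg).sx k).sign = (P.sx k).sign :=
  hf.sign_sub ⟨k, rfl⟩ ⟨k + 1, rfl⟩

theorem sign_sy_squeeze (k : ZMod n) : ((P.squeeze hf hg).sy k).sign = (P.sy k).sign :=
  hg.sign_sub ⟨k, rfl⟩ ⟨k + 1, rfl⟩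

theorem horiz_squeeze_iff (k : ZMod n) : (P.squeeze hf hg).horiz k ↔ P.horiz k := by
  rw [← sy_eq_zero_iff, ← sy_eq_zero_iff, ← Int.sign_eq_zero_iff_zero, sign_sy_squeeze,
    Int.sign_eq_zero_iff_zero]

theorem sameAngles_squeeze : P.SameAngles (P.squeeze hf hg) := by
  intro i
  have h := sign_cross_eq_of_sign_eq (d := P.dvec (i - 1)) (e := P.dvec i)
    (d' := (P.squeeze hf hg).dvec (i - 1)) (e' := (P.squeeze hf hg).dvec i)
    ((P.axis (i - 1)).imp sub_eq_zero.mpr sub_eq_zero.mpr)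
    (sign_sx_squeeze hf hg _).symm (sign_sy_squeeze hf hg _).symm
    (sign_sx_squeeze hf hg _).symm (sign_sy_squeeze hf hg _).symm
  simp only [convexAt, reflexAt, ← Int.sign_eq_one_iff_pos, ← Int.sign_eq_neg_one_iff_neg, h,
    and_self]

theorem isXMonotone_squeeze_iff : (P.squeeze hf hg).IsXMonotone ↔ P.IsXMonotone := by
  simp only [IsXMonotone, horiz_squeeze_iff, ← Int.sign_eq_neg_one_iff_neg, Int.sign_mul,
    sign_sx_squeeze]

end Squeeze

section Columns

variable {n : ℕ} [NeZero n] (P : RectPolygon n)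

theorem minX_le (k : ZMod n) : P.minX ≤ (P.v k).1 := inf'_le _ (mem_univ k)

theorem le_maxX (k : ZMod n) : (P.v k).1 ≤ P.maxX := le_sup' (fun i => (P.v i).1) (mem_univ k)

theorem exists_eq_minX : ∃ k, (P.v k).1 = P.minX :=
  let ⟨k, _, hk⟩ := exists_mem_eq_inf' univ_nonempty fun i => (P.v i).1; ⟨k, hk.symm⟩

theorem exists_eq_maxX : ∃ k, (P.v k).1 = P.maxX :=
  let ⟨k, _, hk⟩ := exists_mem_eq_sup' univ_nonempty fun i => (P.v i).1; ⟨k, hk.symm⟩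

theorem exists_eq_minY : ∃ k, (P.v k).2 = P.minY :=
  let ⟨k, _, hk⟩ := exists_mem_eq_inf' univ_nonempty fun i => (P.v i).2; ⟨k, hk.symm⟩

theorem exists_eq_maxY : ∃ k, (P.v k).2 = P.maxY :=
  let ⟨k, _, hk⟩ := exists_mem_eq_sup' univ_nonempty fun i => (P.v i).2; ⟨k, hk.symm⟩

theorem sum_crossing (c : ℤ) : ∑ k, P.crossing k c = 0 := by
  simp only [crossing, sum_sub_distrib]
  exact sub_eq_zero.mpr
    (Equiv.sum_comp (Equiv.addRight 1) fun k => if c < (P.v k).1 then (1 : ℤ) else 0)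

theorem ncard_crossesRight_eq (c : ℤ) :
    {k | P.CrossesRight k c}.ncard = {k | P.CrossesLeft k c}.ncard := by
  have h := P.sum_crossing c
  simp only [crossing_eq_ite, sum_sub_distrib, sum_boole, sub_eq_zero, Nat.cast_inj] at h
  simpa only [Set.ncard_eq_toFinset_card', Set.toFinset_ofPred] using h

theorem exists_crossesRight {c : ℤ} (h₁ : P.minX ≤ c) (h₂ : c < P.maxX) :
    ∃ k, P.CrossesRight k c := by
  obtain ⟨k₀, hk₀⟩ := P.exists_eq_minX
  obtain ⟨k₁, hk₁⟩ := P.exists_eq_maxX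
  obtain ⟨r, -, -, hr, hr'⟩ := Nat.exists_step_of_not (p := fun r : ℕ => (P.v (k₀ + r)).1 ≤ c)
    (Nat.zero_le (k₁ - k₀).val) (by simpa [hk₀] using h₁) (by simpa [hk₁] using h₂)
  refine ⟨k₀ + r, hr, ?_⟩
  simpa [add_assoc] using hr'

theorem sum_cross_eq : ∑ k, cross (P.v k) (P.v (k + 1)) = -2 * ∑ k, P.sx k * (P.v k).2 := by
  have key : ∀ k, cross (P.v k) (P.v (k + 1)) = -2 * (P.sx k * (P.v k).2) -
      ((P.v k).1 * (P.v k).2 - (P.v (k + 1)).1 * (P.v (k + 1)).2) := fun k => by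
    rcases P.axis k with h | h <;> simp only [cross, sx] <;> rw [h] <;> ring
  have telescope : ∑ k, ((P.v k).1 * (P.v k).2 - (P.v (k + 1)).1 * (P.v (k + 1)).2) = 0 := by
    rw [sum_sub_distrib]
    exact sub_eq_zero.mpr (Equiv.sum_comp (Equiv.addRight 1) fun k => (P.v k).1 * (P.v k).2).symm
  rw [sum_congr rfl fun k _ => key k, sum_sub_distrib, telescope, sub_zero, mul_sum]

theorem sx_eq_sum_crossing (k : ZMod n) : P.sx k = ∑ c ∈ Ico P.minX P.maxX, P.crossing k c := by
  simp only [crossing, sum_sub_distrib, Int.sum_Ico_ite_lt (P.minX_le _) (P.le_maxX _), sx]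
  ring

-- Junk values outside the columns `P.minX ≤ c < P.maxX`.
noncomputable def lowerEdge (c : ℤ) : ZMod n := Classical.epsilon (P.CrossesRight · c)

noncomputable def upperEdge (c : ℤ) : ZMod n := Classical.epsilon (P.CrossesLeft · c)

noncomputable def lowerY (c : ℤ) : ℤ := (P.v (P.lowerEdge c)).2

noncomputable def upperY (c : ℤ) : ℤ := (P.v (P.upperEdge c)).2

noncomputable def colHeight (c : ℤ) : ℤ := P.upperY c - P.lowerY c

def HasMinArea : Prop :=
  ∀ Q : RectPolygon n, Q.ccw → P.SameAngles Q → Q.IsXMonotone → P.area ≤ Q.area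

variable {P}

theorem CrossesRight.mem_columns {k : ZMod n} {c : ℤ} (h : P.CrossesRight k c) :
    P.minX ≤ c ∧ c < P.maxX :=
  ⟨(P.minX_le k).trans h.1, h.2.trans_le (P.le_maxX _)⟩

theorem CrossesLeft.mem_columns {k : ZMod n} {c : ℤ} (h : P.CrossesLeft k c) :
    P.minX ≤ c ∧ c < P.maxX :=
  ⟨(P.minX_le _).trans h.1, h.2.trans_le (P.le_maxX k)⟩

theorem IsXMonotone.card_sign_changes_le (hx : P.IsXMonotone) {k : ZMod n} (hk : P.horiz k)
    {N : ℕ} (hN : 2 * N ≤ n) :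
    #{r ∈ range N | P.sx (k + (2 * r : ℕ)) * P.sx (k + (2 * (r + 1) : ℕ)) < 0} ≤ 2 := by
  refine (Set.ncard_coe_finset _).symm.trans_le (le_of_le_of_eq ?_ hx)
  refine Set.ncard_le_ncard_of_injOn (fun r => k + ((2 * r : ℕ) : ZMod n)) ?_ ?_
  · intro r hr
    simp only [coe_filter, mem_range, Set.mem_ofPred_eq] at hr
    refine ⟨(P.horiz_add_natCast_iff k _).mpr (iff_of_true hk (even_two_mul r)), ?_⟩
    have h2 : k + ((2 * (r + 1) : ℕ) : ZMod n) = k + ((2 * r : ℕ) : ZMod n) + 2 := by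
      push_cast; ring
    exact h2 ▸ hr.2
  · intro r hr r' hr' h
    simp only [coe_filter, mem_range, Set.mem_ofPred_eq] at hr hr'
    have := ZMod.natCast_inj_of_lt (by omega) (by omega) (add_left_cancel h)
    omega

/-- x-monotonicity allows only two reversals of direction in the cyclic sequence of horizontal
edges. -/
theorem IsXMonotone.not_four_sign_changes (hx : P.IsXMonotone) (k : ZMod n) {m₁ m₂ m₃ : ℕ}
    (h₁₂ : m₁ < m₂) (h₂₃ : m₂ < m₃) (h₃ : m₃ < n)
    (hs₁ : P.sx k * P.sx (k + m₁) < 0) (hs₂ : P.sx (k + m₁) * P.sx (k + m₂) < 0)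
    (hs₃ : P.sx (k + m₂) * P.sx (k + m₃) < 0) (hs₄ : P.sx (k + m₃) * P.sx k < 0) : False := by
  have hk : P.horiz k := (P.sx_ne_zero_iff k).mp (left_ne_zero_of_mul hs₁.ne)
  have even_of : ∀ m : ℕ, P.sx (k + m) ≠ 0 → 2 ∣ m := fun m hm =>
    (((P.horiz_add_natCast_iff k m).mp ((P.sx_ne_zero_iff _).mp hm)).mp hk).two_dvd
  obtain ⟨a₁, rfl⟩ := even_of m₁ (right_ne_zero_of_mul hs₁.ne)
  obtain ⟨a₂, rfl⟩ := even_of m₂ (right_ne_zero_of_mul hs₂.ne)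
  obtain ⟨a₃, rfl⟩ := even_of m₃ (right_ne_zero_of_mul hs₃.ne)
  obtain ⟨N, hN⟩ :=
    even_of n (by rw [ZMod.natCast_self, add_zero]; exact left_ne_zero_of_mul hs₁.ne)
  set s : ℕ → ℤ := fun r => P.sx (k + (2 * r : ℕ))
  have hs : ∀ r, s r ≠ 0 := fun r =>
    (P.sx_ne_zero_iff _).mpr ((P.horiz_add_natCast_iff k _).mpr (iff_of_true hk (even_two_mul r)))
  have hs₀ : s 0 = P.sx k := by simp [s]
  have hsN : s N = P.sx k := by
    show P.sx (k + ((2 * N : ℕ) : ZMod n)) = _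
    rw [← hN, ZMod.natCast_self, add_zero]
  have total : ∑ r ∈ Ico 0 N, (if s r * s (r + 1) < 0 then 1 else 0) ≤ 2 := by
    rw [← card_filter, ← range_eq_Ico]; exact hx.card_sign_changes_le hk hN.ge
  rw [← sum_Ico_consecutive _ (Nat.zero_le a₁) (by omega : a₁ ≤ N),
    ← sum_Ico_consecutive _ (by omega : a₁ ≤ a₂) (by omega : a₂ ≤ N),
    ← sum_Ico_consecutive _ (by omega : a₂ ≤ a₃) (by omega : a₃ ≤ N)] at total
  have piece : ∀ a b, a ≤ b → s a * s b < 0 →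
      1 ≤ ∑ r ∈ Ico a b, if s r * s (r + 1) < 0 then 1 else 0 := fun a b hab h => by
    rw [← card_filter]; exact one_le_card_sign_changes s hs hab h
  have := piece 0 a₁ (by omega) (by rwa [hs₀])
  have := piece a₁ a₂ (by omega) hs₂
  have := piece a₂ a₃ (by omega) hs₃
  have := piece a₃ N (by omega) (by rwa [hsN])
  omega

theorem CrossesRight.eq (hx : P.IsXMonotone) {k k' : ZMod n} {c : ℤ}
    (h : P.CrossesRight k c) (h' : P.CrossesRight k' c) : k = k' := by
  by_contra hne
  set m := (k' - k).val
  have hk' : k + (m : ZMod n) = k' := by simp [m]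
  have hm : 0 < m := Nat.pos_of_ne_zero fun h0 => hne (by simpa [h0] using hk')
  have hmn : m < n := ZMod.val_lt _
  set f : ℕ → ℤ := fun r => (P.v (k + r)).1
  have hsx : ∀ r : ℕ, P.sx (k + r) = f (r + 1) - f r := fun r => by
    simp [f, sx, add_assoc]
  have hf₀ : f 0 ≤ c := by simpa [f] using h.1
  have hf₁ : c < f 1 := by simpa [f] using h.2
  have hfm : f m ≤ c := by simpa [f, hk'] using h'.1
  have hfm₁ : c < f (m + 1) := by simpa [f, ← add_assoc, hk'] using h'.2
  have hfn : f n ≤ c := by simpa [f] using h.1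
  obtain ⟨m₁, -, hm₁, hl₁, hl₁'⟩ := Nat.exists_step_of_not (p := (c < f ·)) hm hf₁ hfm.not_gt
  obtain ⟨m₂, hm₂, hm₂', hl₂, hl₂'⟩ :=
    Nat.exists_step_of_not (p := (c < f ·)) hmn hfm₁ hfn.not_gt
  have pos₀ : 0 < P.sx k := by
    have := hsx 0
    simp only [Nat.cast_zero, add_zero, zero_add] at this
    omega
  have neg₁ : P.sx (k + m₁) < 0 := by rw [hsx]; omega
  have pos₂ : 0 < P.sx (k + m) := by rw [hsx]; omega
  have neg₃ : P.sx (k + m₂) < 0 := by rw [hsx]; omega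
  exact hx.not_four_sign_changes k hm₁ (by omega) hm₂' (mul_neg_of_pos_of_neg pos₀ neg₁)
    (mul_neg_of_neg_of_pos neg₁ pos₂) (mul_neg_of_pos_of_neg pos₂ neg₃)
    (mul_neg_of_neg_of_pos neg₃ pos₀)

theorem ncard_crossesRight_eq_one (hx : P.IsXMonotone) {c : ℤ} (h₁ : P.minX ≤ c)
    (h₂ : c < P.maxX) : {k | P.CrossesRight k c}.ncard = 1 := by
  obtain ⟨k, hk⟩ := P.exists_crossesRight h₁ h₂
  exact Set.ncard_eq_one.mpr ⟨k, Set.eq_singleton_iff_unique_mem.mpr ⟨hk, fun _ h => h.eq hx hk⟩⟩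

theorem ncard_crossesLeft_eq_one (hx : P.IsXMonotone) {c : ℤ} (h₁ : P.minX ≤ c)
    (h₂ : c < P.maxX) : {k | P.CrossesLeft k c}.ncard = 1 :=
  (P.ncard_crossesRight_eq c).symm.trans (ncard_crossesRight_eq_one hx h₁ h₂)

theorem CrossesLeft.eq (hx : P.IsXMonotone) {k k' : ZMod n} {c : ℤ}
    (h : P.CrossesLeft k c) (h' : P.CrossesLeft k' c) : k = k' := by
  obtain ⟨a, ha⟩ :=
    Set.ncard_eq_one.mp (ncard_crossesLeft_eq_one hx h.mem_columns.1 h.mem_columns.2)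
  have hk : k ∈ {k | P.CrossesLeft k c} := h
  have hk' : k' ∈ {k | P.CrossesLeft k c} := h'
  rw [ha] at hk hk'
  exact hk.trans hk'.symm

theorem crossesRight_lowerEdge {c : ℤ} (h₁ : P.minX ≤ c) (h₂ : c < P.maxX) :
    P.CrossesRight (P.lowerEdge c) c :=
  Classical.epsilon_spec (P.exists_crossesRight h₁ h₂)

theorem crossesLeft_upperEdge (hx : P.IsXMonotone) {c : ℤ} (h₁ : P.minX ≤ c) (h₂ : c < P.maxX) :
    P.CrossesLeft (P.upperEdge c) c :=
  Classical.epsilon_spec <| Set.nonempty_of_ncard_ne_zero <| by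
    rw [ncard_crossesLeft_eq_one hx h₁ h₂]; exact one_ne_zero

theorem CrossesRight.eq_lowerEdge (hx : P.IsXMonotone) {k : ZMod n} {c : ℤ}
    (h : P.CrossesRight k c) : k = P.lowerEdge c :=
  h.eq hx (crossesRight_lowerEdge h.mem_columns.1 h.mem_columns.2)

theorem CrossesLeft.eq_upperEdge (hx : P.IsXMonotone) {k : ZMod n} {c : ℤ}
    (h : P.CrossesLeft k c) : k = P.upperEdge c :=
  h.eq hx (crossesLeft_upperEdge hx h.mem_columns.1 h.mem_columns.2)

theorem upperEdge_ne_lowerEdge (hx : P.IsXMonotone) {c c' : ℤ} (h₁ : P.minX ≤ c) (h₂ : c < P.maxX)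
    (h₁' : P.minX ≤ c') (h₂' : c' < P.maxX) : P.upperEdge c ≠ P.lowerEdge c' := fun h => by
  have hl := crossesLeft_upperEdge hx h₁ h₂
  have hr := crossesRight_lowerEdge h₁' h₂'
  rw [h] at hl
  obtain ⟨_, _⟩ := hl
  obtain ⟨_, _⟩ := hr
  omega

theorem eq_upperEdge_or_eq_lowerEdge (hx : P.IsXMonotone) {e : ZMod n} (he : P.horiz e) {c : ℤ}
    (h₁ : min (P.v e).1 (P.v (e + 1)).1 ≤ c) (h₂ : c < max (P.v e).1 (P.v (e + 1)).1) :
    e = P.upperEdge c ∨ e = P.lowerEdge c := by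
  have hne := (P.horiz_iff_fst_ne e).mp he
  rcases lt_or_gt_of_ne hne with h | h
  · exact Or.inl (CrossesLeft.eq_upperEdge hx ⟨by omega, by omega⟩)
  · exact Or.inr (CrossesRight.eq_lowerEdge hx ⟨by omega, by omega⟩)

theorem exists_column_of_vertex (hx : P.IsXMonotone) (k : ZMod n) :
    ∃ c, P.minX ≤ c ∧ c < P.maxX ∧ ((P.v k).2 = P.upperY c ∨ (P.v k).2 = P.lowerY c) := by
  obtain ⟨e, he, hk⟩ := P.exists_horiz_of_vertex k
  have hy : (P.v k).2 = (P.v e).2 := by rcases hk with rfl | rfl; exacts [rfl, he]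
  have hne := (P.horiz_iff_fst_ne e).mp he
  have := P.minX_le e
  have := P.minX_le (e + 1)
  have := P.le_maxX e
  have := P.le_maxX (e + 1)
  refine ⟨min (P.v e).1 (P.v (e + 1)).1, by omega, by omega, ?_⟩
  rcases eq_upperEdge_or_eq_lowerEdge hx he le_rfl (by omega) with h | h
  · exact Or.inl (by rw [upperY, ← h, hy])
  · exact Or.inr (by rw [lowerY, ← h, hy])

theorem sum_crossing_mul (hx : P.IsXMonotone) {c : ℤ} (h₁ : P.minX ≤ c) (h₂ : c < P.maxX)
    (w : ZMod n → ℤ) : ∑ k, P.crossing k c * w k = w (P.lowerEdge c) - w (P.upperEdge c) := by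
  simp only [crossing_eq_ite, sub_mul, ite_mul, one_mul, zero_mul, sum_sub_distrib]
  rw [sum_eq_single (P.lowerEdge c) (fun k _ hk => if_neg fun h => hk (h.eq_lowerEdge hx))
      (by simp), if_pos (crossesRight_lowerEdge h₁ h₂),
    sum_eq_single (P.upperEdge c) (fun k _ hk => if_neg fun h => hk (h.eq_upperEdge hx))
      (by simp), if_pos (crossesLeft_upperEdge hx h₁ h₂)]

theorem sum_sx_mul (hx : P.IsXMonotone) (w : ZMod n → ℤ) :
    ∑ k, P.sx k * w k = ∑ c ∈ Ico P.minX P.maxX, (w (P.lowerEdge c) - w (P.upperEdge c)) := by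
  simp_rw [P.sx_eq_sum_crossing, sum_mul]
  rw [sum_comm]
  refine sum_congr rfl fun c hc => ?_
  rw [mem_Ico] at hc
  exact sum_crossing_mul hx hc.1 hc.2 w

theorem sum_cross_eq_sum_colHeight (hx : P.IsXMonotone) :
    ∑ k, cross (P.v k) (P.v (k + 1)) = 2 * ∑ c ∈ Ico P.minX P.maxX, P.colHeight c := by
  rw [sum_cross_eq, sum_sx_mul hx, mul_sum, mul_sum]
  exact sum_congr rfl fun c _ => by simp only [colHeight, upperY, lowerY]; ring

theorem area_eq_of_sum_cross_eq {S : ℤ} (h : ∑ k, cross (P.v k) (P.v (k + 1)) = 2 * S) :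
    P.area = S := by
  rw [area, h, Int.mul_ediv_cancel_left _ two_ne_zero]

theorem colHeight_ne_zero (hx : P.IsXMonotone) {c : ℤ} (h₁ : P.minX ≤ c) (h₂ : c < P.maxX) :
    P.colHeight c ≠ 0 := by
  intro h
  have hl := crossesLeft_upperEdge hx h₁ h₂
  have hr := crossesRight_lowerEdge h₁ h₂
  have hyl : (P.v (P.upperEdge c + 1)).2 = (P.v (P.upperEdge c)).2 := hl.horiz
  have hyr : (P.v (P.lowerEdge c + 1)).2 = (P.v (P.lowerEdge c)).2 := hr.horiz
  simp only [colHeight, upperY, lowerY] at h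
  refine upperEdge_ne_lowerEdge hx h₁ h₂ h₁ h₂
    (P.eq_of_mem_onSeg_of_horiz_iff (iff_of_true hl.horiz hr.horiz) (p := (c, P.upperY c)) ?_ ?_)
  · obtain ⟨_, _⟩ := hl
    simp only [onSeg, upperY]
    omega
  · obtain ⟨_, _⟩ := hr
    simp only [onSeg, upperY]
    omega

/-- The boundary between the upper edges of adjacent columns stays on the line between them, so
it is a single vertical edge. -/
theorem upperEdge_eq_add_two (hx : P.IsXMonotone) {c : ℤ} (h₁ : P.minX ≤ c) (h₂ : c + 1 < P.maxX)
    (hne : P.upperEdge c ≠ P.upperEdge (c + 1)) :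
    P.upperEdge c = P.upperEdge (c + 1) + 2 ∧ (P.v (P.upperEdge (c + 1) + 1)).1 = c + 1 ∧
      (P.v (P.upperEdge c)).1 = c + 1 := by
  set i := P.upperEdge c
  set i' := P.upperEdge (c + 1)
  have hi : P.CrossesLeft i c := crossesLeft_upperEdge hx h₁ (by omega)
  have hi' : P.CrossesLeft i' (c + 1) := crossesLeft_upperEdge hx (by omega) h₂
  have hxi' : (P.v (i' + 1)).1 = c + 1 := by
    by_contra h
    exact hne (CrossesLeft.eq hx hi ⟨by have := hi'.1; omega, by have := hi'.2; omega⟩)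
  have hxi : (P.v i).1 = c + 1 := by
    by_contra h
    exact hne (CrossesLeft.eq hx ⟨by have := hi.1; omega, by have := hi.2; omega⟩ hi')
  set M := (i - (i' + 1)).val
  have hM : i' + 1 + M = i := by simp [M]
  have hMn : M < n := ZMod.val_lt _
  have hsucc : ∀ r : ℕ, i' + 1 + ((r + 1 : ℕ) : ZMod n) = i' + 1 + r + 1 := fun r => by
    push_cast; ring
  have hrun := forall_eq_of_not_step_down (fun r : ℕ => (P.v (i' + 1 + r)).1) (X := c + 1) (M := M)
    (by simpa using hxi') (by simpa [hM] using hxi) ?_ ?_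
  · exact ⟨eq_add_two_of_vertical_run hi'.horiz hi.horiz hM fun r hr => (hrun r hr).trans hxi'.symm,
      hxi', hxi⟩
  · intro r hr h
    by_contra h'
    simp only [hsucc] at h h'
    have := CrossesLeft.eq hx (k := i' + 1 + r) ⟨by omega, by omega⟩ hi
    rw [← hM] at this
    have := ZMod.natCast_inj_of_lt (by omega) hMn (add_left_cancel this)
    omega
  · intro r hr h
    by_contra h'
    simp only [hsucc] at h h'
    have := CrossesLeft.eq hx (k := i' + 1 + r) ⟨by omega, by omega⟩ hi'
    exact ZMod.natCast_add_one_ne_zero (by omega : r + 1 < n) (by linear_combination this)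

theorem lowerEdge_eq_add_two (hx : P.IsXMonotone) {c : ℤ} (h₁ : P.minX ≤ c) (h₂ : c + 1 < P.maxX)
    (hne : P.lowerEdge c ≠ P.lowerEdge (c + 1)) :
    P.lowerEdge (c + 1) = P.lowerEdge c + 2 ∧ (P.v (P.lowerEdge c + 1)).1 = c + 1 ∧
      (P.v (P.lowerEdge (c + 1))).1 = c + 1 := by
  set j := P.lowerEdge c
  set j' := P.lowerEdge (c + 1)
  have hj : P.CrossesRight j c := crossesRight_lowerEdge h₁ (by omega)
  have hj' : P.CrossesRight j' (c + 1) := crossesRight_lowerEdge (by omega) h₂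
  have hxj : (P.v (j + 1)).1 = c + 1 := by
    by_contra h
    exact hne (CrossesRight.eq hx ⟨by have := hj.1; omega, by have := hj.2; omega⟩ hj')
  have hxj' : (P.v j').1 = c + 1 := by
    by_contra h
    exact hne (CrossesRight.eq hx hj ⟨by have := hj'.1; omega, by have := hj'.2; omega⟩)
  set M := (j' - (j + 1)).val
  have hM : j + 1 + M = j' := by simp [M]
  have hMn : M < n := ZMod.val_lt _
  have hsucc : ∀ r : ℕ, j + 1 + ((r + 1 : ℕ) : ZMod n) = j + 1 + r + 1 := fun r => by
    push_cast; ring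
  have hrun := forall_eq_of_not_step_down (fun r : ℕ => -(P.v (j + 1 + r)).1) (X := -(c + 1))
    (M := M) (by simp only [Nat.cast_zero, add_zero, hxj]) (by simp only [hM, hxj']) ?_ ?_
  · refine ⟨eq_add_two_of_vertical_run hj.horiz hj'.horiz hM fun r hr => ?_, hxj, hxj'⟩
    have := hrun r hr
    omega
  · intro r hr h
    by_contra h'
    simp only [hsucc] at h h'
    have := CrossesRight.eq hx (k := j + 1 + r) ⟨by omega, by omega⟩ hj'
    rw [← hM] at this
    have := ZMod.natCast_inj_of_lt (by omega) hMn (add_left_cancel this)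
    omega
  · intro r hr h
    by_contra h'
    simp only [hsucc] at h h'
    have := CrossesRight.eq hx (k := j + 1 + r) ⟨by omega, by omega⟩ hj
    exact ZMod.natCast_add_one_ne_zero (by omega : r + 1 < n) (by linear_combination this)

/-- The upper hull meets the line `x = c + 1` inside one edge: the common upper edge of both
columns, or the vertical edge joining their upper edges. -/
theorem exists_upper_wall (hx : P.IsXMonotone) {c : ℤ} (h₁ : P.minX ≤ c) (h₂ : c + 1 < P.maxX) :
    ∃ e, (P.horiz e → (P.v e).1 ≠ c + 1 ∧ (P.v (e + 1)).1 ≠ c + 1) ∧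
      (e = P.upperEdge c ∨ e = P.upperEdge (c + 1) + 1) ∧
      ∀ y ∈ Set.uIcc (P.upperY c) (P.upperY (c + 1)), onSeg (P.v e) (P.v (e + 1)) (c + 1, y) := by
  have hi : P.CrossesLeft (P.upperEdge c) c := crossesLeft_upperEdge hx h₁ (by omega)
  have hi' : P.CrossesLeft (P.upperEdge (c + 1)) (c + 1) := crossesLeft_upperEdge hx (by omega) h₂
  have hy' : (P.v (P.upperEdge (c + 1) + 1)).2 = P.upperY (c + 1) := hi'.horiz
  by_cases hii : P.upperEdge c = P.upperEdge (c + 1)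
  · have hy : (P.v (P.upperEdge c + 1)).2 = P.upperY c := hi.horiz
    rw [← hii] at hi'
    obtain ⟨_, _⟩ := hi
    obtain ⟨_, _⟩ := hi'
    refine ⟨_, fun _ => ⟨by omega, by omega⟩, Or.inl rfl, fun y hy => ?_⟩
    simp only [upperY, ← hii, Set.uIcc_self, Set.mem_singleton_iff] at hy
    simp only [onSeg, upperY] at *
    omega
  · obtain ⟨hi₂, hx₁, hx₂⟩ := upperEdge_eq_add_two hx h₁ h₂ hii
    have hv : P.v (P.upperEdge (c + 1) + 1 + 1) = P.v (P.upperEdge c) := by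
      rw [hi₂, add_assoc, one_add_one_eq_two]
    refine ⟨_, fun hh => absurd hh ((P.vert_iff_not_horiz _).mp (by rw [vert, hv]; omega)),
      Or.inr rfl, fun y hy => ?_⟩
    rw [Set.mem_uIcc] at hy
    simp only [onSeg, hv, upperY] at *
    omega

theorem exists_lower_wall (hx : P.IsXMonotone) {c : ℤ} (h₁ : P.minX ≤ c) (h₂ : c + 1 < P.maxX) :
    ∃ e, (P.horiz e → (P.v e).1 ≠ c + 1 ∧ (P.v (e + 1)).1 ≠ c + 1) ∧
      (e = P.lowerEdge c ∨ e = P.lowerEdge c + 1) ∧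
      ∀ y ∈ Set.uIcc (P.lowerY c) (P.lowerY (c + 1)), onSeg (P.v e) (P.v (e + 1)) (c + 1, y) := by
  have hj : P.CrossesRight (P.lowerEdge c) c := crossesRight_lowerEdge h₁ (by omega)
  have hj' : P.CrossesRight (P.lowerEdge (c + 1)) (c + 1) := crossesRight_lowerEdge (by omega) h₂
  have hy : (P.v (P.lowerEdge c + 1)).2 = P.lowerY c := hj.horiz
  by_cases hjj : P.lowerEdge c = P.lowerEdge (c + 1)
  · rw [← hjj] at hj'
    obtain ⟨_, _⟩ := hj
    obtain ⟨_, _⟩ := hj'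
    refine ⟨_, fun _ => ⟨by omega, by omega⟩, Or.inl rfl, fun y hy => ?_⟩
    simp only [lowerY, ← hjj, Set.uIcc_self, Set.mem_singleton_iff] at hy
    simp only [onSeg, lowerY] at *
    omega
  · obtain ⟨hj₂, hx₁, hx₂⟩ := lowerEdge_eq_add_two hx h₁ h₂ hjj
    have hv : P.v (P.lowerEdge c + 1 + 1) = P.v (P.lowerEdge (c + 1)) := by
      rw [hj₂, add_assoc, one_add_one_eq_two]
    refine ⟨_, fun hh => absurd hh ((P.vert_iff_not_horiz _).mp (by rw [vert, hv]; omega)),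
      Or.inr rfl, fun y hy => ?_⟩
    rw [Set.mem_uIcc] at hy
    simp only [onSeg, hv, lowerY] at *
    omega

theorem disjoint_uIcc_upperY_lowerY (hx : P.IsXMonotone) {c : ℤ} (h₁ : P.minX ≤ c)
    (h₂ : c + 1 < P.maxX) :
    Disjoint (Set.uIcc (P.upperY c) (P.upperY (c + 1)))
      (Set.uIcc (P.lowerY c) (P.lowerY (c + 1))) := by
  refine Set.disjoint_left.mpr fun y hu hl => ?_
  obtain ⟨e, he, hU, hyU⟩ := exists_upper_wall hx h₁ h₂
  obtain ⟨e', he', hL, hyL⟩ := exists_lower_wall hx h₁ h₂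
  obtain rfl : e = e' := eq_of_mem_onSeg_of_ne_corner (hyU y hu) (hyL y hl) he he'
  have hlc : P.horiz (P.lowerEdge c) := (crossesRight_lowerEdge h₁ (by omega)).horiz
  have hu' : P.horiz (P.upperEdge (c + 1)) := (crossesLeft_upperEdge hx (by omega) h₂).horiz
  rcases hU with rfl | rfl <;> rcases hL with hL | hL
  · exact upperEdge_ne_lowerEdge hx h₁ (by omega) h₁ (by omega) hL
  · exact (P.horiz_add_one_iff _).mp (hL ▸ (crossesLeft_upperEdge hx h₁ (by omega)).horiz) hlc
  · exact (P.horiz_add_one_iff _).mp (hL ▸ hlc) hu'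
  · exact upperEdge_ne_lowerEdge hx (by omega) h₂ h₁ (by omega) (add_right_cancel hL)

theorem colHeight_pos_iff_succ (hx : P.IsXMonotone) {c : ℤ} (h₁ : P.minX ≤ c)
    (h₂ : c + 1 < P.maxX) : 0 < P.colHeight c ↔ 0 < P.colHeight (c + 1) := by
  have hd := Set.disjoint_left.mp (disjoint_uIcc_upperY_lowerY hx h₁ h₂)
  have h₀ := colHeight_ne_zero hx h₁ (by omega)
  have h₀' := colHeight_ne_zero hx (by omega) h₂
  simp only [colHeight, ne_eq, sub_eq_zero, sub_pos] at *
  constructor <;> intro h <;> by_contra h'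
  · exact hd (a := max (P.upperY (c + 1)) (P.lowerY c)) (Set.mem_uIcc.mpr (by omega))
      (Set.mem_uIcc.mpr (by omega))
  · exact hd (a := max (P.upperY c) (P.lowerY (c + 1))) (Set.mem_uIcc.mpr (by omega))
      (Set.mem_uIcc.mpr (by omega))

theorem colHeight_pos (hx : P.IsXMonotone) (hccw : P.ccw) {c : ℤ} (h₁ : P.minX ≤ c)
    (h₂ : c < P.maxX) : 0 < P.colHeight c := by
  obtain ⟨c₀, hc₀, hpos⟩ : ∃ c₀ ∈ Ico P.minX P.maxX, 0 < P.colHeight c₀ := by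
    by_contra! h
    have := sum_nonpos h
    rw [ccw, sum_cross_eq_sum_colHeight hx] at hccw
    omega
  rw [mem_Ico] at hc₀
  exact (Int.iff_of_forall_iff_succ (fun c h₁ h₂ => colHeight_pos_iff_succ hx h₁ h₂)
    hc₀.1 hc₀.2 h₁ h₂).mp hpos

theorem not_hasMinArea_of_empty_column (hx : P.IsXMonotone) (hccw : P.ccw) {s : ℤ}
    (h₁ : P.minX ≤ s) (h₂ : s < P.maxX) (hs : ∀ k, (P.v k).1 ≠ s + 1) : ¬ P.HasMinArea := by
  intro hmin
  have hS : s + 1 ∉ Set.range fun k => (P.v k).1 := fun ⟨k, hk⟩ => hs k hk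
  set Q := P.squeeze (intervalFaithful_squash hS) IntervalFaithful.id
  have hsI : s ∈ Ico P.minX P.maxX := mem_Ico.mpr ⟨h₁, h₂⟩
  have hpos : ∀ c ∈ Ico P.minX P.maxX, 0 < P.colHeight c := fun c hc =>
    colHeight_pos hx hccw (mem_Ico.mp hc).1 (mem_Ico.mp hc).2
  have hQ : ∑ k, cross (Q.v k) (Q.v (k + 1)) =
      2 * ∑ c ∈ (Ico P.minX P.maxX).erase s, P.colHeight c := by
    have hP := sum_cross_eq_sum_colHeight hx
    rw [sum_cross_eq, ← add_sum_erase _ _ hsI] at hP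
    have hQsx : ∀ k, Q.sx k * (Q.v k).2 = P.sx k * (P.v k).2 - P.crossing k s * (P.v k).2 :=
      fun k => by simp only [Q, squeeze, sx, squash, crossing, id]; ring
    rw [Q.sum_cross_eq, sum_congr rfl fun k _ => hQsx k, sum_sub_distrib,
      sum_crossing_mul hx h₁ h₂ fun k => (P.v k).2]
    simp only [colHeight, upperY, lowerY] at hP ⊢
    linarith
  have hs₁ : s + 1 < P.maxX := by
    obtain ⟨k, hk⟩ := P.exists_eq_maxX
    have := hs k
    omega
  have hQpos : 0 < ∑ c ∈ (Ico P.minX P.maxX).erase s, P.colHeight c :=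
    sum_pos (fun c hc => hpos c (mem_of_mem_erase hc))
      ⟨s + 1, mem_erase.mpr ⟨by omega, mem_Ico.mpr ⟨by omega, hs₁⟩⟩⟩
  have hle := hmin Q (by rw [ccw, hQ]; omega) (sameAngles_squeeze _ _)
    ((isXMonotone_squeeze_iff _ _).mpr hx)
  rw [area_eq_of_sum_cross_eq hQ, area_eq_of_sum_cross_eq (sum_cross_eq_sum_colHeight hx),
    ← add_sum_erase _ _ hsI] at hle
  linarith [hpos s hsI]

theorem fst_ne_of_crossesLeft_of_crossesRight (hx : P.IsXMonotone) {i j : ZMod n} {c : ℤ}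
    (hi : P.CrossesLeft i c) (hi' : P.CrossesLeft i (c + 1)) (hj : P.CrossesRight j c)
    (hj' : P.CrossesRight j (c + 1)) (k : ZMod n) : (P.v k).1 ≠ c + 1 := by
  intro hk
  obtain ⟨e, he, hk'⟩ := P.exists_horiz_of_vertex k
  have hne := (P.horiz_iff_fst_ne e).mp he
  have hend : (P.v e).1 = c + 1 ∨ (P.v (e + 1)).1 = c + 1 := by
    rcases hk' with rfl | rfl <;> simp [hk]
  obtain ⟨d, hd, hd₁, hd₂⟩ : ∃ d, (d = c ∨ d = c + 1) ∧
      min (P.v e).1 (P.v (e + 1)).1 ≤ d ∧ d < max (P.v e).1 (P.v (e + 1)).1 := by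
    by_cases hm : min (P.v e).1 (P.v (e + 1)).1 = c + 1
    · exact ⟨c + 1, Or.inr rfl, hm.le, by omega⟩
    · exact ⟨c, Or.inl rfl, by omega, by omega⟩
  have hI : i = P.upperEdge d := by
    rcases hd with rfl | rfl; exacts [hi.eq_upperEdge hx, hi'.eq_upperEdge hx]
  have hJ : j = P.lowerEdge d := by
    rcases hd with rfl | rfl; exacts [hj.eq_lowerEdge hx, hj'.eq_lowerEdge hx]
  obtain ⟨_, _⟩ := hi
  obtain ⟨_, _⟩ := hi'
  obtain ⟨_, _⟩ := hj
  obtain ⟨_, _⟩ := hj'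
  rcases eq_upperEdge_or_eq_lowerEdge hx he hd₁ hd₂ with h | h
  · rw [← hI] at h
    subst h
    omega
  · rw [← hJ] at h
    subst h
    omega

theorem eq_of_crossesLeft_of_crossesRight (hx : P.IsXMonotone) (hccw : P.ccw) (hmin : P.HasMinArea)
    {i j : ZMod n} {c c' : ℤ} (hi : P.CrossesLeft i c) (hj : P.CrossesRight j c)
    (hi' : P.CrossesLeft i c') (hj' : P.CrossesRight j c') : c = c' := by
  wlog hlt : c < c' generalizing c c'
  · by_contra hne
    exact hne (this hi' hj' hi hj (by omega)).symm
  obtain ⟨_, _⟩ := hi'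
  obtain ⟨_, _⟩ := hj'
  exact absurd hmin <| not_hasMinArea_of_empty_column hx hccw hj.mem_columns.1 hj.mem_columns.2 <|
    fst_ne_of_crossesLeft_of_crossesRight hx hi ⟨by have := hi.1; omega, by omega⟩ hj
      ⟨by have := hj.1; omega, by omega⟩

theorem exists_column_straddling (hx : P.IsXMonotone) (hccw : P.ccw) {t : ℤ} (ht₁ : P.minY < t)
    (ht₂ : t < P.maxY) (hv : ∀ k, (P.v k).2 ≠ t) :
    ∃ c, P.minX ≤ c ∧ c < P.maxX ∧ P.lowerY c < t ∧ t < P.upperY c := by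
  by_contra! h
  have hU : ∀ c, P.upperY c ≠ t := fun c => hv _
  have hL : ∀ c, P.lowerY c ≠ t := fun c => hv _
  have hpos : ∀ c, P.minX ≤ c → c < P.maxX → P.lowerY c < P.upperY c := fun c h₁ h₂ =>
    sub_pos.mp (colHeight_pos hx hccw h₁ h₂)
  -- Every column lies above or below the line `y = t`, and disjoint walls keep adjacent
  -- columns on the same side.
  have hconst : ∀ c, P.minX ≤ c → c + 1 < P.maxX → (t < P.lowerY c ↔ t < P.lowerY (c + 1)) := by
    intro c h₁ h₂
    have hd := Set.disjoint_left.mp (disjoint_uIcc_upperY_lowerY hx h₁ h₂)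
    have := h c h₁ (by omega)
    have := h (c + 1) (by omega) h₂
    have := hpos c h₁ (by omega)
    have := hpos (c + 1) (by omega) h₂
    have := hU c
    have := hU (c + 1)
    have := hL c
    have := hL (c + 1)
    constructor <;> intro hlt <;> by_contra hge <;>
      exact hd (a := t) (Set.mem_uIcc.mpr (by omega)) (Set.mem_uIcc.mpr (by omega))
  obtain ⟨k₁, hk₁⟩ := P.exists_eq_maxY
  obtain ⟨c₁, h₁, h₂, hc₁⟩ := exists_column_of_vertex hx k₁
  obtain ⟨k₀, hk₀⟩ := P.exists_eq_minY
  obtain ⟨c₀, h₀, h₀', hc₀⟩ := exists_column_of_vertex hx k₀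
  have above : t < P.lowerY c₁ := by
    have := h c₁ h₁ h₂
    have := hpos c₁ h₁ h₂
    have := hL c₁
    omega
  have below : ¬ t < P.lowerY c₀ := by
    have := hpos c₀ h₀ h₀'
    omega
  exact below ((Int.iff_of_forall_iff_succ hconst h₁ h₂ h₀ h₀').mp above)

theorem not_hasMinArea_of_empty_row (hx : P.IsXMonotone) (hccw : P.ccw) {t : ℤ}
    (ht₁ : P.minY < t) (ht₂ : t < P.maxY) (hv : ∀ k, (P.v k).2 ≠ t) : ¬ P.HasMinArea := by
  intro hmin
  have hS : t - 1 + 1 ∉ Set.range fun k => (P.v k).2 := fun ⟨k, hk⟩ =>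
    hv k (by have : (P.v k).2 = t - 1 + 1 := hk; omega)
  set Q := P.squeeze IntervalFaithful.id (intervalFaithful_squash hS)
  set φ := squash (t - 1)
  have hQ : ∑ k, cross (Q.v k) (Q.v (k + 1)) =
      2 * ∑ c ∈ Ico P.minX P.maxX, (φ (P.upperY c) - φ (P.lowerY c)) := by
    have hQsx : ∀ k, Q.sx k * (Q.v k).2 = P.sx k * φ (P.v k).2 := fun _ => rfl
    rw [Q.sum_cross_eq, sum_congr rfl fun k _ => hQsx k, sum_sx_mul hx fun k => φ (P.v k).2,
      mul_sum, mul_sum]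
    exact sum_congr rfl fun c _ => by simp only [upperY, lowerY]; ring
  have hterm : ∀ c ∈ Ico P.minX P.maxX,
      0 < φ (P.upperY c) - φ (P.lowerY c) ∧ φ (P.upperY c) - φ (P.lowerY c) ≤ P.colHeight c := by
    intro c hc
    rw [mem_Ico] at hc
    have := colHeight_pos hx hccw hc.1 hc.2
    have := hv (P.upperEdge c)
    have := hv (P.lowerEdge c)
    simp only [φ, squash, colHeight, upperY, lowerY] at *
    split_ifs <;> omega
  obtain ⟨c₀, h₀, h₀', hc₀, hc₀'⟩ := exists_column_straddling hx hccw ht₁ ht₂ hv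
  have hlt : ∑ c ∈ Ico P.minX P.maxX, (φ (P.upperY c) - φ (P.lowerY c)) <
      ∑ c ∈ Ico P.minX P.maxX, P.colHeight c := by
    refine sum_lt_sum (fun c hc => (hterm c hc).2) ⟨c₀, mem_Ico.mpr ⟨h₀, h₀'⟩, ?_⟩
    have := hv (P.upperEdge c₀)
    simp only [φ, squash, colHeight, upperY, lowerY] at *
    split_ifs <;> omega
  have hQpos := sum_pos (fun c hc => (hterm c hc).1) ⟨c₀, mem_Ico.mpr ⟨h₀, h₀'⟩⟩
  have hle := hmin Q (by rw [ccw, hQ]; omega) (sameAngles_squeeze _ _)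
    ((isXMonotone_squeeze_iff _ _).mpr hx)
  rw [area_eq_of_sum_cross_eq hQ, area_eq_of_sum_cross_eq (sum_cross_eq_sum_colHeight hx)] at hle
  omega

theorem exists_empty_row (h : (n : ℤ) < P.height) :
    ∃ t, P.minY < t ∧ t < P.maxY ∧ ∀ k, (P.v k).2 ≠ t := by
  have hcard : (univ.image fun k => (P.v k).2).card < (Ico P.minY P.maxY).card := by
    have := card_image_le (s := (univ : Finset (ZMod n))) (f := fun k => (P.v k).2)
    rw [card_univ, ZMod.card] at this
    rw [Int.card_Ico]
    unfold height at h
    omega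
  obtain ⟨t, ht, hts⟩ := exists_mem_notMem_of_card_lt_card hcard
  rw [mem_Ico] at ht
  obtain ⟨k₀, hk₀⟩ := P.exists_eq_minY
  have hne : P.minY ≠ t := fun e => hts (mem_image.mpr ⟨k₀, mem_univ _, hk₀.trans e⟩)
  exact ⟨t, lt_of_le_of_ne ht.1 hne, ht.2, fun k hk => hts (mem_image.mpr ⟨k, mem_univ _, hk⟩)⟩

theorem height_le_of_hasMinArea (hx : P.IsXMonotone) (hccw : P.ccw) (hmin : P.HasMinArea) :
    P.height ≤ n := by
  by_contra! h
  obtain ⟨t, ht₁, ht₂, hv⟩ := exists_empty_row h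
  exact not_hasMinArea_of_empty_row hx hccw ht₁ ht₂ hv hmin

end Columns

end RectPolygon

/-- In an x-monotone lattice polygon `P` of minimum area (among all polygons
realizing its angle sequence): every grid column intersected by `P` properly
intersects exactly one horizontal edge of the upper hull (leftward edges on a
ccw walk) and exactly one of the lower hull (rightward edges); any pair of
horizontal edges, one from each hull, shares at most one grid column; and the
height of `P` is at most `n`, the number of vertices. -/
theorem x_monotone_min_area_column_structure (n : ℕ) [NeZero n] (P : RectPolygon n)
    (hccw : P.ccw) (hx : P.IsXMonotone)
    (hmin : ∀ P' : RectPolygon n, P'.ccw →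
      (∀ i : ZMod n, (P.convexAt i ↔ P'.convexAt i) ∧ (P.reflexAt i ↔ P'.reflexAt i)) →
      P'.IsXMonotone → P.area ≤ P'.area) :
    (∀ c : ℤ, P.minX ≤ c → c + 1 ≤ P.maxX →
      {i : ZMod n | P.horiz i ∧ P.sx i < 0 ∧ spansColumn P i c}.ncard = 1 ∧
      {i : ZMod n | P.horiz i ∧ 0 < P.sx i ∧ spansColumn P i c}.ncard = 1) ∧
    (∀ i j : ZMod n, P.horiz i → P.sx i < 0 → P.horiz j → 0 < P.sx j →
      ∀ c c' : ℤ, spansColumn P i c → spansColumn P j c →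
        spansColumn P i c' → spansColumn P j c' → c = c') ∧
    P.height ≤ (n : ℤ) := by
  refine ⟨fun c h₁ h₂ => ⟨?_, ?_⟩, fun i j hi hi' hj hj' c c' h₁ h₂ h₃ h₄ => ?_,
    RectPolygon.height_le_of_hasMinArea hx hccw hmin⟩
  · simpa only [RectPolygon.crossesLeft_iff] using RectPolygon.ncard_crossesLeft_eq_one hx h₁ h₂
  · simpa only [RectPolygon.crossesRight_iff] using RectPolygon.ncard_crossesRight_eq_one hx h₁ h₂
  · exact RectPolygon.eq_of_crossesLeft_of_crossesRight hx hccw hmin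
      (RectPolygon.crossesLeft_iff.mp ⟨hi, hi', h₁⟩) (RectPolygon.crossesRight_iff.mp ⟨hj, hj', h₂⟩)
      (RectPolygon.crossesLeft_iff.mp ⟨hi, hi', h₃⟩) (RectPolygon.crossesRight_iff.mp ⟨hj, hj', h₄⟩)
end
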